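/- Assume that g_- is generated by g_{-1}, i.e. the Lie subalgebra of g generated by g_{-1} contains g_i for every i < 0. Then for every integer j ≥ 1 and every Z ∈ g_j, if ⁅Y, Z⁆ = 0 for all Y ∈ g_{-1}, then Z = 0. -/

import Mathlib

/-! Let `Z ∈ g j` with `j ≥ 1`. The elements commuting with `Z` form a Lie subalgebra, so `Z`
commutes with the Lie algebra generated by `g (-1)`, which contains every `g i` with `i < 0`.
For `x ∈ g i` we show `κ(Z, x) = 0`. If `i + j ≠ 0`, then `ad Z ∘ ad x` shifts degrees by `i + j`,
so it is traceless. If `i = -j`, then `ad x` commutes with `ad Z`, which is nilpotent because it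
raises degrees and only finitely many `g i` are nonzero; hence `ad Z ∘ ad x` is nilpotent and again
traceless. Nondegeneracy of `κ` gives `Z = 0`. -/

open LieAlgebra Set

section GradedModule

variable {R M : Type*} [CommRing R] [AddCommGroup M] [Module R M] {g : ℤ → Submodule R M}

lemma LinearMap.eq_zero_of_iSup_eq_top {N : Type*} [AddCommGroup N] [Module R N]
    (htop : ⨆ i, g i = ⊤) {f : M →ₗ[R] N} (hf : ∀ i, ∀ v ∈ g i, f v = 0) : f = 0 :=
  LinearMap.ker_eq_top.mp <| eq_top_iff.mpr <| htop ▸ iSup_le fun i v hv ↦ hf i v hv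

lemma iSupIndep.exists_eq_bot_of_lt_abs [IsNoetherian R M] (hg : iSupIndep g) :
    ∃ B : ℕ, ∀ i : ℤ, (B : ℤ) < |i| → g i = ⊥ := by
  obtain ⟨B, hB⟩ := ((WellFoundedGT.finite_ne_bot_of_iSupIndep hg).image Int.natAbs).bddAbove
  refine ⟨B, fun i hi ↦ by_contra fun hne ↦ ?_⟩
  have hiB := hB ⟨i, hne, rfl⟩
  rw [Int.abs_eq_natAbs] at hi
  omega

lemma Module.End.mapsTo_pow_of_mapsTo_add {m : ℤ} {f : Module.End R M}
    (hf : ∀ i, MapsTo f (g i) (g (i + m))) (n : ℕ) (i : ℤ) :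
    MapsTo (f ^ n) (g i) (g (i + n * m)) := by
  induction n with
  | zero => exact fun v hv ↦ by simpa using hv
  | succ n ih =>
    rw [pow_succ', Module.End.coe_mul]
    convert (hf _).comp ih using 2
    push_cast
    ring_nf

lemma Module.End.isNilpotent_of_mapsTo_add [IsNoetherian R M] (hg : DirectSum.IsInternal g)
    {m : ℤ} (hm : m ≠ 0) {f : Module.End R M} (hf : ∀ i, MapsTo f (g i) (g (i + m))) :
    IsNilpotent f := by
  obtain ⟨B, hB⟩ := hg.submodule_iSupIndep.exists_eq_bot_of_lt_abs
  refine ⟨2 * B + 1, LinearMap.eq_zero_of_iSup_eq_top hg.submodule_iSup_eq_top fun i v hv ↦ ?_⟩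
  by_cases hi : |i| ≤ B
  · have hout : (B : ℤ) < |i + ((2 * B + 1 : ℕ) : ℤ) * m| := by
      obtain ⟨hi₁, hi₂⟩ := abs_le.mp hi
      push_cast
      rw [lt_abs]
      rcases hm.lt_or_gt with hm | hm
      · right; nlinarith
      · left; nlinarith
    have hv' := Module.End.mapsTo_pow_of_mapsTo_add hf (2 * B + 1) i hv
    rwa [hB _ hout, SetLike.mem_coe, Submodule.mem_bot] at hv'
  · simp [(Submodule.mem_bot R).mp (hB i (not_le.mp hi) ▸ hv)]

end GradedModule

lemma LieSubalgebra.lie_eq_zero_of_mem_lieSpan {R L : Type*} [CommRing R] [LieRing L]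
    [LieAlgebra R L] {s : Set L} {z : L} (hs : ∀ y ∈ s, ⁅y, z⁆ = 0) {x : L}
    (hx : x ∈ LieSubalgebra.lieSpan R L s) : ⁅x, z⁆ = 0 := by
  induction hx using LieSubalgebra.lieSpan_induction with
  | mem y hy => exact hs y hy
  | zero => exact zero_lie z
  | add _ _ _ _ hu hv => rw [add_lie, hu, hv, add_zero]
  | smul t _ _ hu => rw [smul_lie, hu, smul_zero]
  | lie _ _ _ _ hu hv => rw [lie_lie, hu, hv, lie_zero, lie_zero, sub_zero]

section KillingForm

variable {K L : Type*} [Field K] [LieRing L] [LieAlgebra K L]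

lemma killingForm_eq_zero_of_lie_eq_zero {x y : L} (hxy : ⁅x, y⁆ = 0)
    (hx : IsNilpotent (ad K L x)) : killingForm K L x y = 0 := by
  have hcomm : Commute (ad K L x) (ad K L y) := LinearMap.ext fun v ↦ by
    simp [Module.End.mul_apply, leibniz_lie x y v, hxy]
  rw [killingForm_apply_apply, ← Module.End.mul_eq_comp]
  exact (LinearMap.isNilpotent_trace_of_isNilpotent (hcomm.isNilpotent_mul_right hx)).eq_zero

variable {g : ℤ → Submodule K L}

lemma mapsTo_ad_of_mem (hbr : ∀ i j : ℤ, ∀ x ∈ g i, ∀ y ∈ g j, ⁅x, y⁆ ∈ g (i + j))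
    {j : ℤ} {x : L} (hx : x ∈ g j) (i : ℤ) : MapsTo (ad K L x) (g i) (g (i + j)) :=
  fun v hv ↦ by simpa [add_comm] using hbr j i x hx v hv

lemma killingForm_eq_zero_of_mem_of_add_ne_zero [Module.Finite K L] (hg : DirectSum.IsInternal g)
    (hbr : ∀ i j : ℤ, ∀ x ∈ g i, ∀ y ∈ g j, ⁅x, y⁆ ∈ g (i + j)) {i j : ℤ} {x y : L}
    (hx : x ∈ g i) (hy : y ∈ g j) (hij : i + j ≠ 0) : killingForm K L x y = 0 := by
  rw [killingForm_apply_apply]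
  refine LinearMap.trace_eq_zero_of_mapsTo_ne hg (· + j + i) (fun m ↦ by omega) fun m ↦ ?_
  exact (mapsTo_ad_of_mem hbr hx _).comp (mapsTo_ad_of_mem hbr hy m)

end KillingForm

theorem eq_zero_of_bracket_g_neg_one_eq_zero_general
    {𝕂 : Type*} [Field 𝕂]
    {L : Type*} [LieRing L] [LieAlgebra 𝕂 L] [Module.Finite 𝕂 L]
    (hκ : (killingForm 𝕂 L).Nondegenerate)
    (g : ℤ → Submodule 𝕂 L)
    (hint : DirectSum.IsInternal g)
    (hbr : ∀ i j : ℤ, ∀ x ∈ g i, ∀ y ∈ g j, ⁅x, y⁆ ∈ g (i + j))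
    (hgen : ∀ i : ℤ, i < 0 → ∀ x ∈ g i, x ∈ LieSubalgebra.lieSpan 𝕂 L (g (-1) : Set L)) :
    ∀ j : ℤ, 1 ≤ j → ∀ Z ∈ g j, (∀ Y ∈ g (-1), ⁅Y, Z⁆ = 0) → Z = 0 := by
  intro j hj Z hZ hZ_comm
  have hZ_nil : IsNilpotent (ad 𝕂 L Z) :=
    Module.End.isNilpotent_of_mapsTo_add hint (by omega) (mapsTo_ad_of_mem hbr hZ)
  refine hκ.1 Z fun y ↦ LinearMap.congr_fun (f := killingForm 𝕂 L Z) (g := 0) ?_ y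
  refine LinearMap.eq_zero_of_iSup_eq_top hint.submodule_iSup_eq_top fun i x hx ↦ ?_
  by_cases hij : j + i = 0
  · have hxZ : ⁅x, Z⁆ = 0 :=
      LieSubalgebra.lie_eq_zero_of_mem_lieSpan hZ_comm (hgen i (by omega) x hx)
    exact killingForm_eq_zero_of_lie_eq_zero (by rw [← lie_skew, hxZ, neg_zero]) hZ_nil
  · exact killingForm_eq_zero_of_mem_of_add_ne_zero hint hbr hZ hx hij

/-- If `g₋` is generated by `g (-1)`, then for `j ≥ 1` an element `Z ∈ g j` killed by all
brackets with `g (-1)` is zero. -/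
theorem eq_zero_of_bracket_g_neg_one_eq_zero
    {𝕂 : Type*} [Field 𝕂] [CharZero 𝕂]
    {L : Type*} [LieRing L] [LieAlgebra 𝕂 L] [Module.Finite 𝕂 L]
    (hκ : (killingForm 𝕂 L).Nondegenerate)
    (k : ℕ) (hk : 1 ≤ k)
    (g : ℤ → Submodule 𝕂 L)
    (hbd : ∀ i : ℤ, (k : ℤ) < |i| → g i = ⊥)
    (hint : DirectSum.IsInternal g)
    (hbr : ∀ i j : ℤ, ∀ x ∈ g i, ∀ y ∈ g j, ⁅x, y⁆ ∈ g (i + j))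
    (hgen : ∀ i : ℤ, i < 0 → ∀ x ∈ g i, x ∈ LieSubalgebra.lieSpan 𝕂 L (g (-1) : Set L)) :
    ∀ j : ℤ, 1 ≤ j → ∀ Z ∈ g j, (∀ Y ∈ g (-1), ⁅Y, Z⁆ = 0) → Z = 0 :=
  eq_zero_of_bracket_g_neg_one_eq_zero_general hκ g hint hbr hgen
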